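/- Let L ~ Binomial(k, γ) and E := E_L[(1/2)·log(1 + L·β_min²/γ)] with β_min > 0. If γk = τ for a constant τ > 0, then (1/2)·(1 − e^{−τ})·log(1 + kβ_min²/τ) ≤ E ≤ (1/2)·τ·log(1 + kβ_min²/τ). -/

import Mathlib

open Real Finset

lemma binom_mean (n : ℕ) (x y : ℝ) :
    ∑ l ∈ Finset.range (n + 1), (l : ℝ) * ((Nat.choose n l : ℝ) * x ^ l * y ^ (n - l)) =
      (n : ℝ) * x * (x + y) ^ (n - 1) := by
  cases n with
  | zero => simp
  | succ m =>
    rw [Finset.sum_range_succ']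
    simp only [Nat.cast_zero, zero_mul, add_zero]
    have key : ∀ j : ℕ, ((j : ℝ) + 1) * (Nat.choose (m + 1) (j + 1) : ℝ)
        = ((m : ℝ) + 1) * (Nat.choose m j : ℝ) := by
      intro j
      have h2 := Nat.add_one_mul_choose_eq m j
      have h2' : ((m.succ * m.choose j : ℕ) : ℝ) = ((m.succ.choose j.succ * j.succ : ℕ) : ℝ) := by
        exact_mod_cast h2
      simp only [Nat.succ_eq_add_one] at h2'
      push_cast at h2'
      linear_combination -h2'
    have : ∑ j ∈ Finset.range (m + 1),
        ((j : ℝ) + 1) * ((Nat.choose (m + 1) (j + 1) : ℝ) * x ^ (j + 1) * y ^ (m - j))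
        = ((m : ℝ) + 1) * x * ∑ j ∈ Finset.range (m + 1),
            x ^ j * y ^ (m - j) * (Nat.choose m j : ℝ) := by
      rw [Finset.mul_sum]
      refine Finset.sum_congr rfl fun j hj => ?_
      have h := key j
      calc ((j : ℝ) + 1) * ((Nat.choose (m + 1) (j + 1) : ℝ) * x ^ (j + 1) * y ^ (m - j))
          = (((j : ℝ) + 1) * (Nat.choose (m + 1) (j + 1) : ℝ)) * x ^ (j + 1) * y ^ (m - j) := by ring
        _ = (((m : ℝ) + 1) * (Nat.choose m j : ℝ)) * x ^ (j + 1) * y ^ (m - j) := by rw [h]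
        _ = ((m : ℝ) + 1) * x * (x ^ j * y ^ (m - j) * (Nat.choose m j : ℝ)) := by ring
    push_cast
    rw [this, ← add_pow]

theorem binomial_log_expectation_const (k : ℕ) (γ βmin τ : ℝ)
    (hk : 1 ≤ k) (hγ0 : 0 < γ) (hγ1 : γ ≤ 1) (hβ : 0 < βmin)
    (hτ : 0 < τ) (hτdef : γ * k = τ) :
    (1 / 2) * (1 - Real.exp (-τ)) * Real.log (1 + (k : ℝ) * βmin ^ 2 / τ) ≤
      (∑ l ∈ Finset.range (k + 1),
        (Nat.choose k l : ℝ) * γ ^ l * (1 - γ) ^ (k - l) *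
          ((1 / 2) * Real.log (1 + (l : ℝ) * βmin ^ 2 / γ))) ∧
    (∑ l ∈ Finset.range (k + 1),
        (Nat.choose k l : ℝ) * γ ^ l * (1 - γ) ^ (k - l) *
          ((1 / 2) * Real.log (1 + (l : ℝ) * βmin ^ 2 / γ)))
      ≤ (1 / 2) * τ * Real.log (1 + (k : ℝ) * βmin ^ 2 / τ) := by
  have hk0 : (0 : ℝ) < k := by exact_mod_cast Nat.lt_of_lt_of_le Nat.zero_lt_one hk
  have hA0 : (0 : ℝ) < βmin ^ 2 / γ := div_pos (pow_pos hβ 2) hγ0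
  set A := βmin ^ 2 / γ with hA
  have harg : (k : ℝ) * βmin ^ 2 / τ = A := by
    rw [← hτdef, hA]
    field_simp
  set L := Real.log (1 + A) with hL
  have hL0 : 0 ≤ L := Real.log_nonneg (by linarith)
  have h1γ : 0 ≤ 1 - γ := by linarith
  set p : ℕ → ℝ := fun l => (Nat.choose k l : ℝ) * γ ^ l * (1 - γ) ^ (k - l) with hp
  have hp0 : ∀ l, 0 ≤ p l := fun l =>
    mul_nonneg (mul_nonneg (Nat.cast_nonneg _) (pow_nonneg hγ0.le _)) (pow_nonneg h1γ _)
  have sum_p : ∑ l ∈ Finset.range (k + 1), p l = 1 := by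
    have := add_pow γ (1 - γ) k
    simp only [add_sub_cancel, one_pow] at this
    rw [show ∑ l ∈ Finset.range (k + 1), p l
        = ∑ l ∈ Finset.range (k + 1), γ ^ l * (1 - γ) ^ (k - l) * (Nat.choose k l : ℝ) from
      Finset.sum_congr rfl fun l _ => by simp [hp]; ring]
    rw [← this]
  have mean_p : ∑ l ∈ Finset.range (k + 1), (l : ℝ) * p l = τ := by
    have := binom_mean k γ (1 - γ)
    simp only [add_sub_cancel, one_pow, mul_one] at this
    rw [show ∑ l ∈ Finset.range (k + 1), (l : ℝ) * p l
        = ∑ l ∈ Finset.range (k + 1), (l : ℝ) * ((Nat.choose k l : ℝ) * γ ^ l * (1 - γ) ^ (k - l))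
        from rfl, this, ← hτdef]
    ring
  -- the argument of each log term
  have hterm : ∀ l : ℕ, (l : ℝ) * βmin ^ 2 / γ = (l : ℝ) * A := fun l => by
    rw [hA]; field_simp
  constructor
  · -- lower bound
    rw [harg]
    have p0 : p 0 = (1 - γ) ^ k := by simp [hp]
    have hexp : Real.exp (-τ) = Real.exp (-γ) ^ k := by
      rw [← Real.exp_nat_mul]
      congr 1
      rw [← hτdef]; ring
    have hbase : 1 - γ ≤ Real.exp (-γ) := by
      have := Real.add_one_le_exp (-γ); linarith
    have hgk : (1 - γ) ^ k ≤ Real.exp (-τ) := by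
      rw [hexp]; exact pow_le_pow_left₀ h1γ hbase k
    have hsum_tail : ∑ l ∈ Finset.range k, p (l + 1) = 1 - (1 - γ) ^ k := by
      have := Finset.sum_range_succ' p k
      rw [sum_p] at this
      rw [p0] at this
      linarith
    calc (1 / 2) * (1 - Real.exp (-τ)) * L
        ≤ (1 / 2) * (1 - (1 - γ) ^ k) * L := by
          apply mul_le_mul_of_nonneg_right _ hL0
          nlinarith
      _ = ∑ l ∈ Finset.range k, p (l + 1) * ((1 / 2) * L) := by
          rw [← Finset.sum_mul, hsum_tail]; ring
      _ ≤ ∑ l ∈ Finset.range k, p (l + 1) *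
            ((1 / 2) * Real.log (1 + ((l + 1 : ℕ) : ℝ) * βmin ^ 2 / γ)) := by
          apply Finset.sum_le_sum
          intro l _
          apply mul_le_mul_of_nonneg_left _ (hp0 _)
          apply mul_le_mul_of_nonneg_left _ (by norm_num : (0:ℝ) ≤ 1/2)
          rw [hterm, hL]
          apply Real.log_le_log (by linarith)
          have : A ≤ ((l + 1 : ℕ) : ℝ) * A := by
            have : (1 : ℝ) ≤ ((l + 1 : ℕ) : ℝ) := by exact_mod_cast Nat.one_le_iff_ne_zero.mpr (Nat.succ_ne_zero l)
            nlinarith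
          linarith
      _ = ∑ l ∈ Finset.range (k + 1), p l *
            ((1 / 2) * Real.log (1 + (l : ℝ) * βmin ^ 2 / γ)) := by
          rw [Finset.sum_range_succ']
          simp
  · -- upper bound
    rw [harg]
    calc ∑ l ∈ Finset.range (k + 1), p l * ((1 / 2) * Real.log (1 + (l : ℝ) * βmin ^ 2 / γ))
        ≤ ∑ l ∈ Finset.range (k + 1), p l * ((1 / 2) * ((l : ℝ) * L)) := by
          apply Finset.sum_le_sum
          intro l _
          apply mul_le_mul_of_nonneg_left _ (hp0 _)
          apply mul_le_mul_of_nonneg_left _ (by norm_num : (0:ℝ) ≤ 1/2)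
          rw [hterm, hL]
          have h1 : 1 + (l : ℝ) * A ≤ (1 + A) ^ l := by
            have := one_add_mul_le_pow (by linarith : (-2 : ℝ) ≤ A) l
            linarith
          calc Real.log (1 + (l : ℝ) * A) ≤ Real.log ((1 + A) ^ l) := by
                apply Real.log_le_log _ h1
                positivity
            _ = (l : ℝ) * Real.log (1 + A) := by rw [Real.log_pow]
      _ = (1 / 2) * L * ∑ l ∈ Finset.range (k + 1), (l : ℝ) * p l := by
          rw [Finset.mul_sum]
          exact Finset.sum_congr rfl fun l _ => by ring
      _ = (1 / 2) * τ * L := by rw [mean_p]; ring
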